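/- Let V be a finite-dimensional real inner product space, C ⊆ V a proper cone and F a Finsler function on C which is upper semicontinuous on C. Then the polar of the polar Finsler function recovers F: for every y ∈ C, F y = sSup {w ∈ ℝ | 0 ≤ w ∧ ∀ p ∈ C^o, ⟪p, y⟫ + w * F^o p ≤ 0}. -/

import Mathlib

/-!
The hypograph of `F`, completed by `{0} × (-∞, 0]` at the apex, is a convex cone in `V × ℝ`
(concavity and homogeneity of `F`). It is closed: away from the apex by upper semicontinuity,
and at the apex because an interior point `x₀` of the cone gives the linear bound
`F z ≤ F x₀ / ε * ‖z‖`. If `F y < w`, Hahn–Banach separates `(y, w)` from this cone by a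
functional `(z, t) ↦ ⟪p, z⟫ + s t`; then `p ∈ C^o` and `s ≤ F^o p`, so `⟪p, y⟫ + w F^o p > 0`.
Conversely `⟪p, y⟫ + F y F^o p ≤ 0` for every `p ∈ C^o` by the definition of `F^o`.
-/

/-- The polar cone of `C`. -/
def polarConeSet {V : Type*} [NormedAddCommGroup V] [InnerProductSpace ℝ V]
    (C : Set V) : Set V :=
  {p : V | p ≠ 0 ∧ ∀ y ∈ C, (inner ℝ p y : ℝ) ≤ 0}

/-- The set whose supremum defines the polar Finsler function `F^o p`. -/
def polarWSet {V : Type*} [NormedAddCommGroup V] [InnerProductSpace ℝ V]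
    (C : Set V) (F : V → ℝ) (p : V) : Set ℝ :=
  {w : ℝ | 0 ≤ w ∧ ∀ y ∈ C, (inner ℝ p y : ℝ) + w * F y ≤ 0}

/-- The polar Finsler function `F^o`. -/
noncomputable def polarFinsler {V : Type*} [NormedAddCommGroup V] [InnerProductSpace ℝ V]
    (C : Set V) (F : V → ℝ) (p : V) : ℝ :=
  sSup (polarWSet C F p)

open scoped RealInnerProductSpace

section ConicHypograph

variable {E : Type*} [NormedAddCommGroup E] {K : Set E} {G : E → ℝ}

theorem le_div_mul_norm_of_closedBall_subset [NormedSpace ℝ E]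
    (hK_smul : ∀ c : ℝ, 0 ≤ c → ∀ z ∈ K, c • z ∈ K)
    (hG_add : ∀ x ∈ K, ∀ y ∈ K, G x + G y ≤ G (x + y))
    (hG_smul : ∀ c : ℝ, 0 ≤ c → ∀ z ∈ K, G (c • z) = c * G z)
    (hG_nonneg : ∀ z ∈ K, 0 ≤ G z) {x₀ : E} {ε : ℝ} (hε : 0 < ε)
    (hball : Metric.closedBall x₀ ε ⊆ K) {z : E} (hz : z ∈ K) :
    G z ≤ G x₀ / ε * ‖z‖ := by
  rcases eq_or_ne z 0 with rfl | hz0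
  · simpa using (hG_smul 0 le_rfl 0 hz).le
  set c := ε / ‖z‖
  have hc : 0 < c := by positivity
  have hu : x₀ - c • z ∈ K := hball <| by
    rw [Metric.mem_closedBall, dist_eq_norm, sub_sub_cancel_left, norm_neg, norm_smul,
      Real.norm_of_nonneg hc.le, div_mul_cancel₀ _ (norm_ne_zero_iff.2 hz0)]
  -- `x₀ = c • z + (x₀ - c • z)` splits `G x₀` into at least `c * G z` plus a nonnegative term.
  have key : c * G z ≤ G x₀ := by
    have := hG_add _ (hK_smul c hc.le z hz) _ hu
    rw [add_sub_cancel, hG_smul c hc.le z hz] at this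
    linarith [hG_nonneg _ hu]
  rw [div_mul_eq_mul_div, le_div_iff₀ hε]
  calc G z * ε = c * G z * ‖z‖ := by simp only [c]; field_simp
    _ ≤ G x₀ * ‖z‖ := by gcongr

theorem upperSemicontinuousWithinAt_zero_of_le_mul_norm {M : ℝ}
    (hG0 : G 0 = 0) (hbound : ∀ z ∈ K, G z ≤ M * ‖z‖) :
    UpperSemicontinuousWithinAt G K 0 := by
  intro r hr
  have hcont : Filter.Tendsto (fun z : E => M * ‖z‖) (nhdsWithin 0 K) (nhds 0) := by
    have : Continuous fun z : E => M * ‖z‖ := by fun_prop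
    exact (this.tendsto' 0 0 (by simp)).mono_left nhdsWithin_le_nhds
  filter_upwards [hcont.eventually_lt_const (hG0 ▸ hr), self_mem_nhdsWithin] with z hz hzK
  exact (hbound z hzK).trans_lt hz

theorem exists_inner_add_mul_eq [InnerProductSpace ℝ E] [CompleteSpace E]
    (f : StrongDual ℝ (E × ℝ)) : ∃ p : E, ∃ s : ℝ, ∀ z t, f (z, t) = ⟪p, z⟫ + s * t := by
  refine ⟨(InnerProductSpace.toDual ℝ E).symm (f.comp (.inl ℝ E ℝ)), f (0, 1), fun z t => ?_⟩
  rw [InnerProductSpace.toDual_symm_apply, ← f.comp_inl_add_comp_inr, mul_comm]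
  congr 1
  simpa using f.map_smul t ((0 : E), (1 : ℝ))

theorem exists_inner_add_mul_le_of_lt [InnerProductSpace ℝ E] [CompleteSpace E]
    (hK_closed : IsClosed K) (hK_add : ∀ x ∈ K, ∀ y ∈ K, x + y ∈ K)
    (hK_smul : ∀ c : ℝ, 0 ≤ c → ∀ z ∈ K, c • z ∈ K)
    (hG_add : ∀ x ∈ K, ∀ y ∈ K, G x + G y ≤ G (x + y))
    (hG_smul : ∀ c : ℝ, 0 ≤ c → ∀ z ∈ K, G (c • z) = c * G z)
    (hG_usc : UpperSemicontinuousOn G K) {y : E} (hy : y ∈ K) {w : ℝ} (hw : G y < w) :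
    ∃ p : E, ∃ s : ℝ, 0 ≤ s ∧ (∀ z ∈ K, ⟪p, z⟫ + s * G z ≤ 0) ∧ 0 < ⟪p, y⟫ + s * w := by
  have h0K : (0 : E) ∈ K := by simpa using hK_smul 0 le_rfl y hy
  have hG0 : G 0 = 0 := by simpa using hG_smul 0 le_rfl y hy
  let H : ProperCone ℝ (E × ℝ) :=
    { carrier := {q | q.1 ∈ K ∧ q.2 ≤ G q.1}
      add_mem' := fun {a b} ha hb =>
        ⟨hK_add _ ha.1 _ hb.1, (add_le_add ha.2 hb.2).trans (hG_add _ ha.1 _ hb.1)⟩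
      zero_mem' := ⟨h0K, hG0.ge⟩
      smul_mem' := fun c a ha => by
        refine ⟨hK_smul c c.2 _ ha.1, ?_⟩
        change (c : ℝ) * a.2 ≤ G ((c : ℝ) • a.1)
        rw [hG_smul c c.2 _ ha.1]
        exact mul_le_mul_of_nonneg_left ha.2 c.2
      isClosed' := (upperSemicontinuousOn_iff_isClosed_hypograph hK_closed).1 hG_usc }
  have hyw : (y, w) ∉ H := fun h => (h.2.trans_lt hw).false
  obtain ⟨f, hfH, hfyw⟩ := H.hyperplane_separation_point hyw
  obtain ⟨p, s, hf⟩ := exists_inner_add_mul_eq (-f)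
  have hfH' : ∀ z ∈ K, ∀ t ≤ G z, ⟪p, z⟫ + s * t ≤ 0 := fun z hz t ht => by
    simpa [← hf] using hfH (z, t) ⟨hz, ht⟩
  refine ⟨p, s, ?_, fun z hz => hfH' z hz _ le_rfl, by simpa [← hf] using hfyw⟩
  simpa using hfH' 0 h0K (-1) (by rw [hG0]; norm_num)

end ConicHypograph

section FinslerCone

variable {V : Type*} {C : Set V} {F : V → ℝ}

section Algebraic

variable [AddCommGroup V]

theorem add_mem_union_zero (hC_add : ∀ x ∈ C, ∀ y ∈ C, x + y ∈ C) {x y : V}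
    (hx : x ∈ C ∪ {0}) (hy : y ∈ C ∪ {0}) : x + y ∈ C ∪ {0} := by
  rcases hx with hx | rfl <;> rcases hy with hy | rfl <;> simp [*]

theorem indicator_add_le_union_zero (h0 : (0 : V) ∉ C)
    (hC_add : ∀ x ∈ C, ∀ y ∈ C, x + y ∈ C) (hF_add : ∀ x ∈ C, ∀ y ∈ C, F x + F y ≤ F (x + y))
    {x y : V} (hx : x ∈ C ∪ {0}) (hy : y ∈ C ∪ {0}) :
    C.indicator F x + C.indicator F y ≤ C.indicator F (x + y) := by
  rcases hx with hx | rfl <;> rcases hy with hy | rfl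
  · simpa [hx, hy, hC_add x hx y hy] using hF_add x hx y hy
  all_goals simp [*]

variable [Module ℝ V]

theorem smul_mem_union_zero (hcone : ∀ (s : ℝ) (y : V), 0 < s → y ∈ C → s • y ∈ C)
    {c : ℝ} (hc : 0 ≤ c) {z : V} (hz : z ∈ C ∪ {0}) : c • z ∈ C ∪ {0} := by
  rcases hc.eq_or_lt with rfl | hc
  · simp
  rcases hz with hz | rfl
  · exact Or.inl (hcone c z hc hz)
  · simp

theorem add_mem_of_convex (hconv : Convex ℝ C)
    (hcone : ∀ (s : ℝ) (y : V), 0 < s → y ∈ C → s • y ∈ C) {x y : V} (hx : x ∈ C) (hy : y ∈ C) :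
    x + y ∈ C := by
  have := hcone 2 _ two_pos (hconv hx hy (by norm_num : (0 : ℝ) ≤ 1 / 2)
    (by norm_num : (0 : ℝ) ≤ 1 / 2) (by norm_num))
  convert this using 1
  module

theorem add_le_apply_add (hcone : ∀ (s : ℝ) (y : V), 0 < s → y ∈ C → s • y ∈ C)
    (hFhom : ∀ (s : ℝ) (y : V), 0 < s → y ∈ C → F (s • y) = s * F y)
    (hFconc : ∀ y ∈ C, ∀ w ∈ C, ∀ t : ℝ, t ∈ Set.Icc (0:ℝ) 1 →
      t * F y + (1 - t) * F w ≤ F (t • y + (1 - t) • w))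
    {x y : V} (hx : x ∈ C) (hy : y ∈ C) : F x + F y ≤ F (x + y) := by
  have := hFconc _ (hcone 2 x two_pos hx) _ (hcone 2 y two_pos hy) (1 / 2) (by norm_num)
  rw [hFhom 2 x two_pos hx, hFhom 2 y two_pos hy,
    show (1 / 2 : ℝ) • (2 : ℝ) • x + (1 - 1 / 2 : ℝ) • (2 : ℝ) • y = x + y by module] at this
  linarith

theorem indicator_smul_union_zero (h0 : (0 : V) ∉ C)
    (hcone : ∀ (s : ℝ) (y : V), 0 < s → y ∈ C → s • y ∈ C)
    (hFhom : ∀ (s : ℝ) (y : V), 0 < s → y ∈ C → F (s • y) = s * F y)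
    {c : ℝ} (hc : 0 ≤ c) {z : V} (hz : z ∈ C ∪ {0}) :
    C.indicator F (c • z) = c * C.indicator F z := by
  rcases hc.eq_or_lt with rfl | hc
  · simp [h0]
  rcases hz with hz | rfl
  · simp [hz, hcone c z hc hz, hFhom c z hc hz]
  · simp [h0]

end Algebraic

theorem upperSemicontinuousOn_indicator_union_zero [NormedAddCommGroup V] (h0 : (0 : V) ∉ C)
    (hFusc : UpperSemicontinuousOn F C) {M : ℝ}
    (hbound : ∀ z ∈ C ∪ {0}, C.indicator F z ≤ M * ‖z‖) :
    UpperSemicontinuousOn (C.indicator F) (C ∪ {0}) := by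
  rintro x (hx | rfl)
  · intro r hr
    rw [Set.indicator_of_mem hx] at hr
    rw [Set.union_singleton, nhdsWithin_insert_of_ne (ne_of_mem_of_not_mem hx h0)]
    filter_upwards [hFusc x hx r hr, self_mem_nhdsWithin] with z hz hzC
    rwa [Set.indicator_of_mem hzC]
  · exact upperSemicontinuousWithinAt_zero_of_le_mul_norm (Set.indicator_of_notMem h0 F) hbound

end FinslerCone

section Polar

variable {V : Type*} [NormedAddCommGroup V] [InnerProductSpace ℝ V] {C : Set V} {F : V → ℝ}

theorem bddAbove_polarWSet {y₁ : V} (hy₁ : y₁ ∈ C) (hFy₁ : 0 < F y₁) (p : V) :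
    BddAbove (polarWSet C F p) :=
  ⟨-⟪p, y₁⟫ / F y₁, fun w hw => by rw [le_div_iff₀ hFy₁]; linarith [hw.2 y₁ hy₁]⟩

theorem inner_add_polarFinsler_mul_le {p z : V} (hp : p ∈ polarConeSet C) (hz : z ∈ C)
    (hFz : 0 ≤ F z) : ⟪p, z⟫ + polarFinsler C F p * F z ≤ 0 := by
  rcases hFz.eq_or_lt with hFz | hFz
  · simpa [← hFz] using hp.2 z hz
  have hzero : (0 : ℝ) ∈ polarWSet C F p := ⟨le_rfl, fun y hy => by simpa using hp.2 y hy⟩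
  have hle : polarFinsler C F p ≤ -⟪p, z⟫ / F z :=
    csSup_le ⟨0, hzero⟩ fun w hw => by rw [le_div_iff₀ hFz]; linarith [hw.2 z hz]
  rw [le_div_iff₀ hFz] at hle
  linarith

end Polar

theorem exists_inner_add_mul_le_of_finsler_lt
    {V : Type*} [NormedAddCommGroup V] [InnerProductSpace ℝ V] [CompleteSpace V]
    {C : Set V} (hconv : Convex ℝ C) (h0 : (0 : V) ∉ C)
    (hcone : ∀ (s : ℝ) (y : V), 0 < s → y ∈ C → s • y ∈ C)
    (hclosed : IsClosed (C ∪ {0})) (hint : (interior (C ∪ {0})).Nonempty) {F : V → ℝ}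
    (hFnn : ∀ y ∈ C, 0 ≤ F y)
    (hFhom : ∀ (s : ℝ) (y : V), 0 < s → y ∈ C → F (s • y) = s * F y)
    (hFconc : ∀ y ∈ C, ∀ w ∈ C, ∀ t : ℝ, t ∈ Set.Icc (0:ℝ) 1 →
      t * F y + (1 - t) * F w ≤ F (t • y + (1 - t) • w))
    (hFusc : UpperSemicontinuousOn F C) {y : V} (hy : y ∈ C) {w : ℝ} (hw : F y < w) :
    ∃ p : V, ∃ s : ℝ, 0 ≤ s ∧ (∀ z ∈ C, ⟪p, z⟫ + s * F z ≤ 0) ∧ 0 < ⟪p, y⟫ + s * w := by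
  have hC_add : ∀ x ∈ C, ∀ y ∈ C, x + y ∈ C := fun _ hx _ hy => add_mem_of_convex hconv hcone hx hy
  have hF_add : ∀ x ∈ C, ∀ y ∈ C, F x + F y ≤ F (x + y) := fun _ hx _ hy =>
    add_le_apply_add hcone hFhom hFconc hx hy
  have hK_add : ∀ x ∈ C ∪ {0}, ∀ y ∈ C ∪ {0}, x + y ∈ C ∪ {0} := fun _ hx _ hy =>
    add_mem_union_zero hC_add hx hy
  have hK_smul : ∀ c : ℝ, 0 ≤ c → ∀ z ∈ C ∪ {0}, c • z ∈ C ∪ {0} := fun _ hc _ hz =>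
    smul_mem_union_zero hcone hc hz
  have hG_add : ∀ x ∈ C ∪ {0}, ∀ y ∈ C ∪ {0},
      C.indicator F x + C.indicator F y ≤ C.indicator F (x + y) := fun _ hx _ hy =>
    indicator_add_le_union_zero h0 hC_add hF_add hx hy
  have hG_smul : ∀ c : ℝ, 0 ≤ c → ∀ z ∈ C ∪ {0}, C.indicator F (c • z) = c * C.indicator F z :=
    fun _ hc _ hz => indicator_smul_union_zero h0 hcone hFhom hc hz
  have hG_nonneg : ∀ z ∈ C ∪ {0}, 0 ≤ C.indicator F z := fun z _ => Set.indicator_nonneg hFnn z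
  obtain ⟨x₀, hx₀⟩ := hint
  obtain ⟨ε, hε, hball⟩ :=
    Metric.nhds_basis_closedBall.mem_iff.1 (mem_interior_iff_mem_nhds.1 hx₀)
  have hG_usc := upperSemicontinuousOn_indicator_union_zero h0 hFusc fun z hz =>
    le_div_mul_norm_of_closedBall_subset hK_smul hG_add hG_smul hG_nonneg hε hball hz
  obtain ⟨p, s, hs, hpK, hpy⟩ := exists_inner_add_mul_le_of_lt hclosed hK_add hK_smul hG_add
    hG_smul hG_usc (Or.inl hy) (by rwa [Set.indicator_of_mem hy])
  exact ⟨p, s, hs, fun z hz => by simpa [hz] using hpK z (Or.inl hz), hpy⟩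

theorem polar_polar_finsler_general
    {V : Type*} [NormedAddCommGroup V] [InnerProductSpace ℝ V] [FiniteDimensional ℝ V]
    (C : Set V) (hconv : Convex ℝ C) (h0 : (0:V) ∉ C)
    (hcone : ∀ (s : ℝ) (y : V), 0 < s → y ∈ C → s • y ∈ C)
    (hclosed : IsClosed (C ∪ {0}))
    (hint : (interior (C ∪ {0})).Nonempty)
    (F : V → ℝ)
    (hFnn : ∀ y ∈ C, 0 ≤ F y)
    (hFhom : ∀ (s : ℝ) (y : V), 0 < s → y ∈ C → F (s • y) = s * F y)
    (hFconc : ∀ y ∈ C, ∀ w ∈ C, ∀ t : ℝ, t ∈ Set.Icc (0:ℝ) 1 →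
      t * F y + (1 - t) * F w ≤ F (t • y + (1 - t) • w))
    (hFpos : ∃ y₁ ∈ C, 0 < F y₁)
    (hFusc : UpperSemicontinuousOn F C) :
    ∀ y ∈ C,
      F y = sSup {w : ℝ | 0 ≤ w ∧ ∀ p ∈ polarConeSet C,
        (inner ℝ p y : ℝ) + w * polarFinsler C F p ≤ 0} := by
  obtain ⟨y₁, hy₁, hFy₁⟩ := hFpos
  intro y hy
  symm
  refine IsGreatest.csSup_eq ⟨⟨hFnn y hy, fun p hp => ?_⟩, ?_⟩
  · linarith [inner_add_polarFinsler_mul_le hp hy (hFnn y hy), mul_comm (F y) (polarFinsler C F p)]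
  rintro w ⟨hw0, hw⟩
  by_contra! hlt
  obtain ⟨p, s, hs, hpC, hpy⟩ := exists_inner_add_mul_le_of_finsler_lt hconv h0 hcone hclosed hint
    hFnn hFhom hFconc hFusc hy hlt
  have hp0 : p ≠ 0 := by
    rintro rfl
    have := hpC y₁ hy₁
    simp only [inner_zero_left, zero_add] at this hpy
    nlinarith
  have hsp : s ≤ polarFinsler C F p := le_csSup (bddAbove_polarWSet hy₁ hFy₁ p) ⟨hs, hpC⟩
  have hpolar : p ∈ polarConeSet C :=
    ⟨hp0, fun z hz => by linarith [hpC z hz, mul_nonneg hs (hFnn z hz)]⟩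
  linarith [hw p hpolar, mul_le_mul_of_nonneg_left hsp hw0]

/-- The polar of the polar Finsler function recovers `F`: `(F^o)^o = F` on `C`. -/
theorem polar_polar_finsler
    {V : Type*} [NormedAddCommGroup V] [InnerProductSpace ℝ V] [FiniteDimensional ℝ V]
    (C : Set V) (hne : C.Nonempty) (hconv : Convex ℝ C) (h0 : (0:V) ∉ C)
    (hcone : ∀ (s : ℝ) (y : V), 0 < s → y ∈ C → s • y ∈ C)
    (hclosed : IsClosed (C ∪ {0}))
    (hint : (interior (C ∪ {0})).Nonempty)
    (F : V → ℝ)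
    (hFnn : ∀ y ∈ C, 0 ≤ F y)
    (hFhom : ∀ (s : ℝ) (y : V), 0 < s → y ∈ C → F (s • y) = s * F y)
    (hFconc : ∀ y ∈ C, ∀ w ∈ C, ∀ t : ℝ, t ∈ Set.Icc (0:ℝ) 1 →
      t * F y + (1 - t) * F w ≤ F (t • y + (1 - t) • w))
    (hFpos : ∃ y₁ ∈ C, 0 < F y₁)
    (hFusc : UpperSemicontinuousOn F C) :
    ∀ y ∈ C,
      F y = sSup {w : ℝ | 0 ≤ w ∧ ∀ p ∈ polarConeSet C,
        (inner ℝ p y : ℝ) + w * polarFinsler C F p ≤ 0} :=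
  polar_polar_finsler_general C hconv h0 hcone hclosed hint F hFnn hFhom hFconc hFpos hFusc
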